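/- Let g = u(2) with the basis and structure constants as above, and consider ω = Σ a_α e^{0α} + Σ a_α e^{βγ} and the complex structure J = J_{a,b} given by Je₀ = a e₀ + b e₁, Je₁ = c e₀ - a e₁ (c = -(1+a²)/b, b ≠ 0), Je₂ = -e₃, Je₃ = e₂. Then ω is J-invariant (i.e. ω(J·, J·) = ω) if and only if either a₂ = a₃ = 0, or (a, b) = (0, 1). -/
import Mathlib


/-!
STATEMENT 15. Let `g = u(2)` with basis `e₀,…,e₃` as before (`e₀` central,
`[e_α,e_β] = -e_γ` cyclically), realized on `Fin 4 → ℝ`. Consider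
`ω = Σ a_α e^{0α} + Σ a_α e^{βγ}` and the complex structure `J = J_{a,b}` given by
`Je₀ = a e₀ + b e₁`, `Je₁ = c e₀ - a e₁` (with `c = -(1+a²)/b`, `b ≠ 0`), `Je₂ = -e₃`,
`Je₃ = e₂`. Then `ω` is `J`-invariant (`ω(J·, J·) = ω`) if and only if either
`a₂ = a₃ = 0`, or `(a, b) = (0, 1)`.
-/

namespace Stmt15

/-- the complex structure `J_{a,b}` (in coordinates w.r.t. the basis `e₀,…,e₃`). -/
def J (a b c : ℝ) (u : Fin 4 → ℝ) : Fin 4 → ℝ :=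
  ![a * u 0 + c * u 1, b * u 0 - a * u 1, u 3, -u 2]

/-- `ω = Σ a_α e^{0α} + Σ a_α e^{βγ}`. -/
def ω (a₁ a₂ a₃ : ℝ) (u v : Fin 4 → ℝ) : ℝ :=
  a₁ * (u 0 * v 1 - u 1 * v 0) + a₂ * (u 0 * v 2 - u 2 * v 0) + a₃ * (u 0 * v 3 - u 3 * v 0)
  + a₁ * (u 2 * v 3 - u 3 * v 2) + a₂ * (u 3 * v 1 - u 1 * v 3) + a₃ * (u 1 * v 2 - u 2 * v 1)

end Stmt15

open Stmt15 in
theorem stmt15 (a b c a₁ a₂ a₃ : ℝ) (hb : b ≠ 0) (hc : c = -(1 + a ^ 2) / b) :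
    (∀ u v : Fin 4 → ℝ, ω a₁ a₂ a₃ (J a b c u) (J a b c v) = ω a₁ a₂ a₃ u v)
      ↔ ((a₂ = 0 ∧ a₃ = 0) ∨ (a = 0 ∧ b = 1)) := by
  have hbc : b * c = -(1 + a ^ 2) := by
    rw [hc]; field_simp
  constructor
  · intro h
    by_cases hab : a = 0 ∧ b = 1
    · exact Or.inr hab
    · left
      have h1 := h ![1,0,0,0] ![0,0,1,0]
      have h2 := h ![1,0,0,0] ![0,0,0,1]
      simp only [ω, J, Matrix.cons_val_zero, Matrix.cons_val_one, Matrix.head_cons,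
        Matrix.cons_val_two, Matrix.tail_cons, Matrix.cons_val_three] at h1 h2
      -- h1 : (b-1)a₂ - a a₃ = 0 ; h2 : a a₂ + (b-1)a₃ = 0 (up to ring)
      have hd : (b - 1) ^ 2 + a ^ 2 ≠ 0 := by
        intro hh
        have ha : a = 0 := by nlinarith [sq_nonneg (b-1), sq_nonneg a]
        have hb1 : b = 1 := by nlinarith [sq_nonneg (b-1), sq_nonneg a]
        exact hab ⟨ha, hb1⟩
      constructor
      · have : a₂ * ((b - 1) ^ 2 + a ^ 2) = 0 := by linear_combination (b - 1) * h1 + a * h2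
        exact (mul_eq_zero.1 this).resolve_right hd
      · have : a₃ * ((b - 1) ^ 2 + a ^ 2) = 0 := by linear_combination (-a) * h1 + (b - 1) * h2
        exact (mul_eq_zero.1 this).resolve_right hd
  · rintro (⟨h2, h3⟩ | ⟨ha, hb1⟩) u v
    · subst h2; subst h3
      simp only [ω, J, Matrix.cons_val_zero, Matrix.cons_val_one, Matrix.head_cons,
        Matrix.cons_val_two, Matrix.tail_cons, Matrix.cons_val_three]
      linear_combination (-(a₁ * (u 0 * v 1 - u 1 * v 0))) * hbc
    · subst ha; subst hb1
      have hc' : c = -1 := by rw [hc]; norm_num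
      subst hc'
      simp only [ω, J, Matrix.cons_val_zero, Matrix.cons_val_one, Matrix.head_cons,
        Matrix.cons_val_two, Matrix.tail_cons, Matrix.cons_val_three]
      ring
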